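/- Let I = {1,…,p} and let B ⊆ 2^I be a collection of nonempty blocks with a base code length cl₀ : B → [0,∞] satisfying ∑_{B ∈ B} 2^{-cl₀(B)} ≤ 1. Define cl(B) = cl₀(B) + 1 for B ∈ B, and for every nonempty F ⊆ I define cl(F) = min { ∑_{j=1}^b cl(B_j) : F = ⋃_{j=1}^b B_j, B_j ∈ B, b ≥ 1 } (with cl(F) = ∞ if F cannot be written as such a union). Then cl is a coding length, i.e. ∑_{F ⊆ I, F ≠ ∅} 2^{-cl(F)} ≤ 1. -/

import Mathlib

open MeasureTheory ProbabilityTheory ENNReal Matrix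

noncomputable section

/-- squared ℓ₂ norm of a vector in ℝⁿ -/
def sqNorm {n : ℕ} (v : Fin n → ℝ) : ℝ := ∑ i, v i ^ 2

/-- ℓ₂ norm of a vector in ℝⁿ -/
def l2norm {n : ℕ} (v : Fin n → ℝ) : ℝ := Real.sqrt (∑ i, v i ^ 2)

/-- `2^{-x}` for `x ∈ [0,∞]`, with `2^{-∞} = 0`. -/
def nmass (x : ℝ≥0∞) : ℝ≥0∞ :=
  if x = ⊤ then 0 else ENNReal.ofReal ((2 : ℝ) ^ (-x.toReal))

/-- A coding length on a finite index set. -/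
def IsCodingLength {ι : Type*} [Fintype ι] [DecidableEq ι]
    (cl : Finset ι → ℝ≥0∞) : Prop :=
  cl ∅ = 0 ∧
    ∑ F ∈ Finset.univ.filter (fun F : Finset ι => F ≠ ∅), nmass (cl F) ≤ 1

/-- coding complexity `c(F) = |F| + cl(F)` -/
def cComplex {ι : Type*} [Fintype ι] [DecidableEq ι]
    (cl : Finset ι → ℝ≥0∞) (F : Finset ι) : ℝ≥0∞ := F.card + cl F

/-- `supp(β) ⊆ F` -/
def suppSubset {ι : Type*} (β : ι → ℝ) (F : Finset ι) : Prop :=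
  ∀ j, β j ≠ 0 → j ∈ F

/-- coding complexity of a vector: `c(β) = min{c(F) : supp(β) ⊆ F}` -/
def cVec {ι : Type*} [Fintype ι] [DecidableEq ι]
    (cl : Finset ι → ℝ≥0∞) (β : ι → ℝ) : ℝ≥0∞ :=
  ⨅ (F : Finset ι) (_ : suppSubset β F), cComplex cl F

/-- sub-additivity of a coding complexity -/
def SubAdditive {ι : Type*} [Fintype ι] [DecidableEq ι]
    (cl : Finset ι → ℝ≥0∞) : Prop :=
  ∀ F F' : Finset ι, cComplex cl (F ∪ F') ≤ cComplex cl F + cComplex cl F'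

/-- Sub-Gaussian noise assumption: independent components with sub-Gaussian mgf bound. -/
def SubGaussianNoise {Ω : Type*} [MeasurableSpace Ω] (μ : Measure Ω) {n : ℕ}
    (y : Ω → Fin n → ℝ) (σ : ℝ) : Prop :=
  (∀ i, Measurable fun ω => y ω i) ∧
  iIndepFun (fun (i : Fin n) => fun ω => y ω i) μ ∧
  ∀ (i : Fin n) (t : ℝ),
    ∫ ω, Real.exp (t * (y ω i - ∫ ω', y ω' i ∂μ)) ∂μ ≤ Real.exp (σ ^ 2 * t ^ 2 / 2)

/-- the expectation vector `E y` -/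
def expVec {Ω : Type*} [MeasurableSpace Ω] (μ : Measure Ω) {n : ℕ}
    (y : Ω → Fin n → ℝ) : Fin n → ℝ := fun i => ∫ ω, y ω i ∂μ

/-- ρ₋(F) -/
def rhoMinusF {n p : ℕ} (X : Matrix (Fin n) (Fin p) ℝ) (F : Finset (Fin p)) : ℝ :=
  sInf {r | ∃ β : Fin p → ℝ, β ≠ 0 ∧ suppSubset β F ∧
    r = sqNorm (X.mulVec β) / (n * sqNorm β)}

/-- ρ₊(F) -/
def rhoPlusF {n p : ℕ} (X : Matrix (Fin n) (Fin p) ℝ) (F : Finset (Fin p)) : ℝ :=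
  sSup {r | ∃ β : Fin p → ℝ, β ≠ 0 ∧ suppSubset β F ∧
    r = sqNorm (X.mulVec β) / (n * sqNorm β)}

/-- ρ₋(s) = inf{ρ₋(F) : c(F) ≤ s} -/
def rhoMinus {n p : ℕ} (X : Matrix (Fin n) (Fin p) ℝ)
    (cl : Finset (Fin p) → ℝ≥0∞) (s : ℝ≥0∞) : ℝ :=
  sInf {r | ∃ F : Finset (Fin p), cComplex cl F ≤ s ∧ r = rhoMinusF X F}

/-- Projection matrix onto the span of the columns of `X` indexed by `S`:
`P_S = X_S (X_Sᵀ X_S)⁻¹ X_Sᵀ`. -/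
def projMat {n p : ℕ} (X : Matrix (Fin n) (Fin p) ℝ) (S : Finset (Fin p)) :
    Matrix (Fin n) (Fin n) ℝ :=
  let XS : Matrix (Fin n) {j // j ∈ S} ℝ := Matrix.of fun i j => X i j.1
  XS * (XSᵀ * XS)⁻¹ * XSᵀ

/-- the least squares solution restricted to support `F` -/
def leastSquares {n p : ℕ} (X : Matrix (Fin n) (Fin p) ℝ) (y : Fin n → ℝ)
    (F : Finset (Fin p)) (β : Fin p → ℝ) : Prop :=
  suppSubset β F ∧
    ∀ β' : Fin p → ℝ, suppSubset β' F →
      sqNorm (X.mulVec β - y) ≤ sqNorm (X.mulVec β' - y)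

/-- the greedy gain criterion φ(B) -/
def phi {n p : ℕ} (X : Matrix (Fin n) (Fin p) ℝ) (y : Fin n → ℝ)
    (cl : Finset (Fin p) → ℝ≥0∞) (Fcur : Finset (Fin p)) (β : Fin p → ℝ)
    (B : Finset (Fin p)) : ℝ :=
  sqNorm ((projMat X (B \ Fcur)).mulVec (X.mulVec β - y)) /
    (cComplex cl (B ∪ Fcur) - cComplex cl Fcur).toReal

/-- a valid selection of block `B` in one step of the structured greedy algorithm -/
def GreedyStep {n p : ℕ} (X : Matrix (Fin n) (Fin p) ℝ) (y : Fin n → ℝ)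
    (cl : Finset (Fin p) → ℝ≥0∞) (Blocks : Finset (Finset (Fin p))) (γ : ℝ)
    (Fprev : Finset (Fin p)) (βprev : Fin p → ℝ) (B : Finset (Fin p)) : Prop :=
  B ∈ Blocks ∧
  ((∃ B' ∈ Blocks, ¬ B' ⊆ Fprev ∧ cComplex cl (B' ∪ Fprev) ≤ cComplex cl Fprev) →
      ¬ B ⊆ Fprev ∧ cComplex cl (B ∪ Fprev) ≤ cComplex cl Fprev) ∧
  ((∀ B' ∈ Blocks, ¬ B' ⊆ Fprev → cComplex cl Fprev < cComplex cl (B' ∪ Fprev)) →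
      ∀ B' ∈ Blocks, γ * phi X y cl Fprev βprev B' ≤ phi X y cl Fprev βprev B)

/-- a run of the structured greedy algorithm with stopping time `k`. -/
def IsGreedyRun {n p : ℕ} (X : Matrix (Fin n) (Fin p) ℝ) (y : Fin n → ℝ)
    (cl : Finset (Fin p) → ℝ≥0∞) (Blocks : Finset (Finset (Fin p))) (γ s : ℝ)
    (F : ℕ → Finset (Fin p)) (β : ℕ → Fin p → ℝ) (k : ℕ) : Prop :=
  F 0 = ∅ ∧ β 0 = 0 ∧ 0 < k ∧
  (∀ m < k, ∃ B, GreedyStep X y cl Blocks γ (F m) (β m) B ∧ F (m + 1) = B ∪ F m) ∧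
  (∀ m, 0 < m → m ≤ k → leastSquares X y (F m) (β m)) ∧
  ENNReal.ofReal s < cVec cl (β k) ∧
  (∀ m, 0 < m → m < k → cVec cl (β m) ≤ ENNReal.ofReal s)

/-- block coding complexity `c(β, B)` -/
def blockComplexity {ι : Type*} [Fintype ι] [DecidableEq ι] (cl : Finset ι → ℝ≥0∞)
    (Blocks : Finset (Finset ι)) (β : ι → ℝ) : ℝ≥0∞ :=
  ⨅ (b : ℕ) (Bs : Fin b → Finset ι) (_ : ∀ j, Bs j ∈ Blocks)
    (_ : ∀ i, β i ≠ 0 → ∃ j, i ∈ Bs j), ∑ j, cComplex cl (Bs j)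

/-- `ρ₀(B) = max_{B ∈ Blocks} ρ₊(B)` -/
def rho0 {n p : ℕ} (X : Matrix (Fin n) (Fin p) ℝ)
    (Blocks : Finset (Finset (Fin p))) : ℝ :=
  sSup {r | ∃ B ∈ Blocks, r = rhoPlusF X B}

/-- `-log₂ x` valued in `[0,∞]`, with value `∞` for `x ≤ 0` -/
def negLog2 (x : ℝ) : ℝ≥0∞ :=
  if x ≤ 0 then ⊤ else ENNReal.ofReal (-(Real.logb 2 x))

end

/-!
Every nonempty `F` of finite code length has an optimal cover `F = B₁ ∪ ⋯ ∪ Bₙ₊₁` by blocks, and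
then `2^{-cl(F)} = ∏ⱼ 2^{-(cl₀(Bⱼ)+1)}`. So `2^{-cl(F)}` is at most the total weight of the words
of blocks covering `F`, and since every word covers exactly one set, the total mass is at most the
weight of all nonempty words, `∑ₙ (∑_B 2^{-(cl₀(B)+1)})ⁿ⁺¹ ≤ ∑ₙ 2^{-(n+1)} = 1`: the `+1` in the
block lengths pays for not knowing the number of blocks in advance.
-/

lemma nmass_zero : nmass 0 = 1 := by simp [nmass]

lemma nmass_one : nmass 1 = 2⁻¹ := by
  simp [nmass, Real.rpow_neg_one, ENNReal.ofReal_inv_of_pos]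

lemma nmass_add (a b : ℝ≥0∞) : nmass (a + b) = nmass a * nmass b := by
  unfold nmass
  rcases eq_or_ne a ⊤ with rfl | ha
  · simp
  rcases eq_or_ne b ⊤ with rfl | hb
  · simp
  rw [if_neg (add_ne_top.2 ⟨ha, hb⟩), if_neg ha, if_neg hb, ENNReal.toReal_add ha hb, neg_add,
    Real.rpow_add two_pos, ENNReal.ofReal_mul (by positivity)]

lemma nmass_sum {α : Type*} (s : Finset α) (f : α → ℝ≥0∞) :
    nmass (∑ a ∈ s, f a) = ∏ a ∈ s, nmass (f a) := by
  induction s using Finset.cons_induction with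
  | empty => exact nmass_zero
  | cons a s _ ih => rw [Finset.sum_cons, Finset.prod_cons, nmass_add, ih]

theorem ENNReal.exists_eq_iInf_of_natCast_le {f : ℕ → ℝ≥0∞} (hf : ∀ n : ℕ, (n : ℝ≥0∞) ≤ f n) :
    ∃ n, f n = ⨅ n, f n := by
  by_cases htop : ∀ n, f n = ⊤
  · exact ⟨0, by rw [htop 0, eq_comm, iInf_eq_top]; exact htop⟩
  push Not at htop
  obtain ⟨n₀, hn₀⟩ := htop
  obtain ⟨N, hN⟩ := ENNReal.exists_nat_gt hn₀
  have hn₀N : n₀ ∈ Finset.range N := Finset.mem_range.2 (mod_cast (hf n₀).trans_lt hN)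
  obtain ⟨m, -, hm⟩ := (Finset.range N).exists_min_image f ⟨n₀, hn₀N⟩
  refine ⟨m, le_antisymm (le_iInf fun n => ?_) (iInf_le f m)⟩
  by_cases hn : n < N
  · exact hm n (Finset.mem_range.2 hn)
  · calc f m ≤ f n₀ := hm n₀ hn₀N
      _ ≤ N := hN.le
      _ ≤ n := by exact_mod_cast not_lt.1 hn
      _ ≤ f n := hf n

theorem ENNReal.tsum_prod_nonempty_words_le_one {α : Type*} [Fintype α] {w : α → ℝ≥0∞}
    (hw : ∑ a, w a ≤ 2⁻¹) : ∑' t : Σ n, Fin (n + 1) → α, ∏ j, w (t.2 j) ≤ 1 := by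
  have hwords : ∀ n, ∑' word : Fin (n + 1) → α, ∏ j, w (word j) = (∑ a, w a) ^ (n + 1) := by
    intro n
    rw [tsum_fintype, ← Fintype.prod_sum, Finset.prod_const, Finset.card_fin]
  calc ∑' t : Σ n, Fin (n + 1) → α, ∏ j, w (t.2 j)
      = ∑' n, (∑ a, w a) ^ (n + 1) := by rw [ENNReal.tsum_sigma']; simp only [hwords]
    _ ≤ ∑' n : ℕ, (2⁻¹ : ℝ≥0∞) ^ (n + 1) := ENNReal.tsum_le_tsum fun n => pow_le_pow_left' hw _
    _ = 1 := by
      rw [ENNReal.tsum_geometric_add_one, ENNReal.one_sub_inv_two, inv_inv,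
        ENNReal.inv_mul_cancel two_ne_zero ofNat_ne_top]

section BlockCoding

variable {ι : Type*} [Fintype ι] [DecidableEq ι] (ℬ : Finset (Finset ι)) (cl0 : Finset ι → ℝ≥0∞)

noncomputable def blockCodeLength (F : Finset ι) : ℝ≥0∞ :=
  ⨅ (b : ℕ) (_ : 1 ≤ b) (Bs : Fin b → Finset ι) (_ : ∀ j, Bs j ∈ ℬ)
    (_ : F = Finset.univ.biUnion Bs), ∑ j, (cl0 (Bs j) + 1)

theorem exists_blockCover_eq_blockCodeLength {F : Finset ι}
    (hF : blockCodeLength ℬ cl0 F ≠ ⊤) :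
    ∃ (n : ℕ) (Bs : Fin (n + 1) → Finset ι), (∀ j, Bs j ∈ ℬ) ∧ Finset.univ.biUnion Bs = F ∧
      ∑ j, (cl0 (Bs j) + 1) = blockCodeLength ℬ cl0 F := by
  set cost : (b : ℕ) → (Fin b → Finset ι) → ℝ≥0∞ := fun b Bs =>
    ⨅ (_ : ∀ j, Bs j ∈ ℬ) (_ : F = Finset.univ.biUnion Bs), ∑ j, (cl0 (Bs j) + 1)
  have hcost_ge : ∀ b : ℕ, (b : ℝ≥0∞) ≤ ⨅ (_ : 1 ≤ b) (Bs : Fin b → Finset ι), cost b Bs := by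
    intro b
    simp only [cost, le_iInf_iff]
    intro _ Bs _ _
    calc (b : ℝ≥0∞) = ∑ _j : Fin b, 1 := by simp
      _ ≤ ∑ j, (cl0 (Bs j) + 1) := Finset.sum_le_sum fun j _ => le_add_self
  obtain ⟨b, hb⟩ := ENNReal.exists_eq_iInf_of_natCast_le hcost_ge
  obtain ⟨Bs, hBs⟩ := exists_eq_ciInf_of_finite (f := cost b)
  change _ = blockCodeLength ℬ cl0 F at hb
  rw [← hb] at hF ⊢
  have h1b : 1 ≤ b := by_contra fun h => hF (iInf_neg h)
  rw [iInf_pos h1b, ← hBs] at hF ⊢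
  have hmem : ∀ j, Bs j ∈ ℬ := by_contra fun h => hF (iInf_neg h)
  have hcover : F = Finset.univ.biUnion Bs := by_contra fun h => hF (by simp [cost, hmem, h])
  obtain ⟨n, rfl⟩ := Nat.exists_eq_add_of_le' h1b
  exact ⟨n, Bs, hmem, hcover.symm, by simp [cost, hmem, hcover]⟩

theorem nmass_blockCodeLength_le (F : Finset ι) :
    nmass (blockCodeLength ℬ cl0 F) ≤ ∑' t : Σ n, Fin (n + 1) → Finset ι,
      if Finset.univ.biUnion t.2 = F then ∏ j, (↑ℬ : Set (Finset ι)).indicator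
        (fun B => nmass (cl0 B + 1)) (t.2 j) else 0 := by
  by_cases hF : blockCodeLength ℬ cl0 F = ⊤
  · simp [hF, nmass]
  obtain ⟨n, Bs, hmem, hcover, hcost⟩ := exists_blockCover_eq_blockCodeLength ℬ cl0 hF
  refine le_of_eq_of_le ?_ (ENNReal.le_tsum ⟨n, Bs⟩)
  rw [← hcost, nmass_sum, if_pos hcover]
  exact Finset.prod_congr rfl fun j _ => (Set.indicator_of_mem (hmem j) (fun B => nmass (cl0 B + 1))).symm

end BlockCoding

theorem block_coding_is_coding_length_general {p : ℕ}
    (ℬ : Finset (Finset (Fin p)))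
    (cl0 : Finset (Fin p) → ℝ≥0∞)
    (hsum : ∑ B ∈ ℬ, nmass (cl0 B) ≤ 1)
    (cl : Finset (Fin p) → ℝ≥0∞)
    (hcl_empty : cl ∅ = 0)
    (hcl : ∀ F : Finset (Fin p), F ≠ ∅ →
      cl F = ⨅ (b : ℕ) (_ : 1 ≤ b) (Bs : Fin b → Finset (Fin p))
        (_ : ∀ j, Bs j ∈ ℬ) (_ : F = Finset.univ.biUnion Bs),
          ∑ j, (cl0 (Bs j) + 1)) :
    IsCodingLength cl := by
  refine ⟨hcl_empty, ?_⟩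
  set w := (↑ℬ : Set (Finset (Fin p))).indicator fun B => nmass (cl0 B + 1)
  have hw : ∑ B, w B ≤ 2⁻¹ := by
    simp only [w, Finset.sum_indicator_subset _ (Finset.subset_univ ℬ), nmass_add, nmass_one,
      ← Finset.sum_mul]
    simpa using mul_le_mul_left hsum 2⁻¹
  calc ∑ F ∈ Finset.univ.filter (fun F : Finset (Fin p) => F ≠ ∅), nmass (cl F)
      ≤ ∑ F, ∑' t : Σ n, Fin (n + 1) → Finset (Fin p),
          if Finset.univ.biUnion t.2 = F then ∏ j, w (t.2 j) else 0 := by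
        refine (Finset.sum_le_sum fun F hF => ?_).trans
          (Finset.sum_le_sum_of_subset (Finset.filter_subset _ _))
        rw [hcl F (Finset.mem_filter.1 hF).2]
        exact nmass_blockCodeLength_le ℬ cl0 F
    _ = ∑' t : Σ n, Fin (n + 1) → Finset (Fin p), ∏ j, w (t.2 j) := by
        rw [← Summable.tsum_finsetSum fun _ _ => ENNReal.summable]
        simp only [Finset.sum_ite_eq, Finset.mem_univ, if_true]
    _ ≤ 1 := ENNReal.tsum_prod_nonempty_words_le_one hw

/-- block coding yields a coding length:
Given a finite collection `ℬ` of nonempty blocks in `{1,…,p}` with base code lengths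
`cl₀` satisfying `∑_{B ∈ ℬ} 2^{-cl₀(B)} ≤ 1`, the induced block coding length
`cl(F) = min{∑_j (cl₀(B_j)+1) : F = ⋃_j B_j, B_j ∈ ℬ}` (and `∞` when no such
representation exists, `cl(∅) = 0`) satisfies `∑_{F ≠ ∅} 2^{-cl(F)} ≤ 1`,
i.e. `cl` is a coding length. -/
theorem block_coding_is_coding_length {p : ℕ}
    (ℬ : Finset (Finset (Fin p))) (hne : ∀ B ∈ ℬ, B ≠ ∅)
    (cl0 : Finset (Fin p) → ℝ≥0∞)
    (hsum : ∑ B ∈ ℬ, nmass (cl0 B) ≤ 1)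
    (cl : Finset (Fin p) → ℝ≥0∞)
    (hcl_empty : cl ∅ = 0)
    (hcl : ∀ F : Finset (Fin p), F ≠ ∅ →
      cl F = ⨅ (b : ℕ) (_ : 1 ≤ b) (Bs : Fin b → Finset (Fin p))
        (_ : ∀ j, Bs j ∈ ℬ) (_ : F = Finset.univ.biUnion Bs),
          ∑ j, (cl0 (Bs j) + 1)) :
    IsCodingLength cl :=
  block_coding_is_coding_length_general ℬ cl0 hsum cl hcl_empty hcl
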